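/- The function φ is strictly decreasing on (0,+∞) with lim_{u↓0} φ(u) = +∞ and lim_{u→+∞} φ(u) = 0, and for every u > 0 one has 2/M ≤ φ(u)·√(F(u))/u ≤ 2/m. (Equivalently, the inverse ψ of φ is differentiable and satisfies 2/M ≤ v·|ψ′(v)|/ψ(v) ≤ 2/m for every v > 0.) -/

import Mathlib

open MeasureTheory Filter Set Topology

/-- The antiderivative `F(t) = ∫₀ᵗ f(τ) dτ` of `f` vanishing at `0`. -/
noncomputable def Fant (f : ℝ → ℝ) (t : ℝ) : ℝ := ∫ τ in (0:ℝ)..t, f τ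

/-- The function `φ(u) = ∫ᵤ^{+∞} dt/√(F(t))`. -/
noncomputable def phi (f : ℝ → ℝ) (u : ℝ) : ℝ := ∫ t in Set.Ioi u, 1 / Real.sqrt (Fant f t)

namespace PhiAux

variable {f f' : ℝ → ℝ} {m M : ℝ}

lemma fint (hc : ContinuousOn f (Set.Ici 0)) {a b : ℝ} (ha : 0 ≤ a) (hb : 0 ≤ b) :
    IntervalIntegrable f volume a b := by
  apply (hc.mono ?_).intervalIntegrable
  intro x hx
  rw [Set.mem_uIcc] at hx
  rcases hx with ⟨h1, _⟩ | ⟨h1, _⟩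
  · exact le_trans ha h1
  · exact le_trans hb h1

lemma Fzero : Fant f 0 = 0 := intervalIntegral.integral_same

lemma Fmono (hc : ContinuousOn f (Ici 0)) (hf_nonneg : ∀ t, 0 ≤ t → 0 ≤ f t) :
    MonotoneOn (Fant f) (Ici 0) := by
  intro a ha b hb hab
  have h1 : Fant f b - Fant f a = ∫ x in a..b, f x := by
    rw [Fant, Fant, ← intervalIntegral.integral_interval_sub_left (fint hc le_rfl hb)
      (fint hc le_rfl ha)]
  have h2 : 0 ≤ ∫ x in a..b, f x :=
    intervalIntegral.integral_nonneg hab (fun u hu => hf_nonneg u (le_trans ha.out hu.1))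
  linarith

lemma Fpos (hc : ContinuousOn f (Ici 0)) (hf_pos : ∀ t, 0 < t → 0 < f t) {t : ℝ} (ht : 0 < t) :
    0 < Fant f t :=
  intervalIntegral.intervalIntegral_pos_of_pos_on (fint hc le_rfl ht.le)
    (fun x hx => hf_pos x hx.1) ht

lemma Fcont (hc : ContinuousOn f (Ici 0)) : ContinuousOn (Fant f) (Ici 0) := by
  intro t ht
  have ht0 : (0:ℝ) ≤ t := ht
  have hsub : uIcc (0:ℝ) (t+1) = Icc 0 (t+1) := uIcc_of_le (by linarith)
  have h : ContinuousOn (fun x => ∫ τ in (0:ℝ)..x, f τ) (uIcc 0 (t+1)) := by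
    apply intervalIntegral.continuousOn_primitive_interval
    rw [hsub]
    exact (hc.mono Icc_subset_Ici_self).integrableOn_compact isCompact_Icc
  have ht1 : Icc (0:ℝ) (t+1) ∈ 𝓝[Ici 0] t := by
    rw [← Ici_inter_Iic]
    exact Filter.inter_mem self_mem_nhdsWithin
      (mem_nhdsWithin_of_mem_nhds (Iic_mem_nhds (by linarith)))
  have h2 : ContinuousWithinAt (Fant f) (Icc 0 (t+1)) t := by
    have := h t (by rw [hsub]; exact ⟨ht0, by linarith⟩)
    rw [hsub] at this
    exact this
  exact h2.mono_of_mem_nhdsWithin ht1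

lemma FhasDeriv (hc : ContinuousOn f (Ici 0)) {t : ℝ} (ht : 0 < t) :
    HasDerivAt (Fant f) (f t) t := by
  have hIoi : ContinuousOn f (Ioi 0) := hc.mono Ioi_subset_Ici_self
  exact intervalIntegral.integral_hasDerivAt_right (fint hc le_rfl ht.le)
    (hIoi.stronglyMeasurableAtFilter isOpen_Ioi t ht)
    ((hc t ht.le).continuousAt (Ici_mem_nhds ht))

lemma helper_mono (hc : ContinuousOn f (Ici 0))
    (hd : ∀ t ∈ Ici (0:ℝ), HasDerivWithinAt f (f' t) (Ici 0) t)
    (c : ℝ) (h : ∀ t, 0 < t → 0 ≤ t * f' t - (c - 1) * f t) :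
    MonotoneOn (fun t => t * f t - c * Fant f t) (Ici 0) := by
  have hder : ∀ t ∈ Ioi (0:ℝ), HasDerivAt (fun t => t * f t - c * Fant f t)
      (t * f' t - (c - 1) * f t) t := by
    intro t ht
    have h1 := ((hasDerivAt_id t).mul ((hd t (mem_Ici.2 (le_of_lt ht))).hasDerivAt
        (Ici_mem_nhds ht))).sub ((FhasDeriv hc ht).const_mul c)
    refine h1.congr_deriv ?_
    simp only [id_eq]
    ring
  apply monotoneOn_of_deriv_nonneg (convex_Ici 0)
  · exact (continuousOn_id.mul hc).sub (continuousOn_const.mul (Fcont hc))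
  · rw [interior_Ici]
    exact fun t ht => (hder t ht).differentiableAt.differentiableWithinAt
  · rw [interior_Ici]
    intro t ht
    rw [(hder t ht).deriv]
    exact h t ht

lemma helper_anti (hc : ContinuousOn f (Ici 0))
    (hd : ∀ t ∈ Ici (0:ℝ), HasDerivWithinAt f (f' t) (Ici 0) t)
    (c : ℝ) (h : ∀ t, 0 < t → t * f' t - (c - 1) * f t ≤ 0) :
    AntitoneOn (fun t => t * f t - c * Fant f t) (Ici 0) := by
  have hder : ∀ t ∈ Ioi (0:ℝ), HasDerivAt (fun t => t * f t - c * Fant f t)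
      (t * f' t - (c - 1) * f t) t := by
    intro t ht
    have h1 := ((hasDerivAt_id t).mul ((hd t (mem_Ici.2 (le_of_lt ht))).hasDerivAt
        (Ici_mem_nhds ht))).sub ((FhasDeriv hc ht).const_mul c)
    refine h1.congr_deriv ?_
    simp only [id_eq]
    ring
  apply antitoneOn_of_deriv_nonpos (convex_Ici 0)
  · exact (continuousOn_id.mul hc).sub (continuousOn_const.mul (Fcont hc))
  · rw [interior_Ici]
    exact fun t ht => (hder t ht).differentiableAt.differentiableWithinAt
  · rw [interior_Ici]
    intro t ht
    rw [(hder t ht).deriv]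
    exact h t ht

lemma key (hf0 : f 0 = 0) (hf_pos : ∀ t, 0 < t → 0 < f t)
    (hc : ContinuousOn f (Ici 0))
    (hd : ∀ t ∈ Ici (0:ℝ), HasDerivWithinAt f (f' t) (Ici 0) t)
    (hcond : ∀ t, 0 < t → 1 + m ≤ t * f' t / f t ∧ t * f' t / f t ≤ 1 + M)
    {t : ℝ} (ht : 0 < t) :
    (2 + m) * Fant f t ≤ t * f t ∧ t * f t ≤ (2 + M) * Fant f t := by
  constructor
  · have hmn := helper_mono hc hd (2 + m) (fun s hs => by
      have h1 := (hcond s hs).1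
      have h2 := hf_pos s hs
      have h3 : (1 + m) * f s ≤ s * f' s := (le_div_iff₀ h2).1 h1
      have h4 : (2 + m - 1) * f s = (1 + m) * f s := by ring
      linarith)
    have h2 := hmn (self_mem_Ici) (mem_Ici.2 ht.le) ht.le
    simp only [hf0, Fzero, mul_zero, zero_mul, sub_zero] at h2
    linarith
  · have hmn := helper_anti hc hd (2 + M) (fun s hs => by
      have h1 := (hcond s hs).2
      have h2 := hf_pos s hs
      have h3 : s * f' s ≤ (1 + M) * f s := (div_le_iff₀ h2).1 h1
      have h4 : (2 + M - 1) * f s = (1 + M) * f s := by ring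
      linarith)
    have h2 := hmn (self_mem_Ici) (mem_Ici.2 ht.le) ht.le
    simp only [hf0, Fzero, mul_zero, zero_mul, sub_zero] at h2
    linarith


lemma Gmono (hf0 : f 0 = 0) (hf_pos : ∀ t, 0 < t → 0 < f t)
    (hc : ContinuousOn f (Ici 0))
    (hd : ∀ t ∈ Ici (0:ℝ), HasDerivWithinAt f (f' t) (Ici 0) t)
    (hcond : ∀ t, 0 < t → 1 + m ≤ t * f' t / f t ∧ t * f' t / f t ≤ 1 + M) :
    MonotoneOn (fun t => Fant f t * t ^ (-(2+m) : ℝ)) (Ioi 0) := by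
  have hder : ∀ t ∈ Ioi (0:ℝ), HasDerivAt (fun t => Fant f t * t ^ (-(2+m) : ℝ))
      (f t * t ^ (-(2+m) : ℝ) + Fant f t * (-(2+m) * t ^ (-(2+m) - 1 : ℝ))) t := by
    intro t ht
    exact (FhasDeriv hc ht).mul (Real.hasDerivAt_rpow_const (Or.inl (ne_of_gt ht)))
  apply monotoneOn_of_deriv_nonneg (convex_Ioi 0)
  · intro t ht
    exact ((hder t ht).continuousAt).continuousWithinAt
  · rw [interior_Ioi]
    exact fun t ht => (hder t ht).differentiableAt.differentiableWithinAt
  · rw [interior_Ioi]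
    intro t ht
    rw [(hder t ht).deriv]
    have ht0 : (0:ℝ) < t := ht
    have e1 : t ^ (-(2+m) : ℝ) = t ^ (-(2+m) - 1 : ℝ) * t := by
      rw [← Real.rpow_add_one (ne_of_gt ht0) (-(2+m) - 1)]
      norm_num
    have hk := (key hf0 hf_pos hc hd hcond ht0).1
    have ha : (0:ℝ) ≤ t ^ (-(2+m) - 1 : ℝ) := Real.rpow_nonneg ht0.le _
    rw [e1]
    nlinarith [mul_nonneg ha (by linarith : (0:ℝ) ≤ t * f t - (2+m) * Fant f t)]

lemma F_lower (hf0 : f 0 = 0) (hf_pos : ∀ t, 0 < t → 0 < f t)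
    (hc : ContinuousOn f (Ici 0))
    (hd : ∀ t ∈ Ici (0:ℝ), HasDerivWithinAt f (f' t) (Ici 0) t)
    (hcond : ∀ t, 0 < t → 1 + m ≤ t * f' t / f t ∧ t * f' t / f t ≤ 1 + M)
    {t : ℝ} (ht : 1 ≤ t) :
    Fant f 1 * t ^ ((2+m) : ℝ) ≤ Fant f t := by
  have ht0 : (0:ℝ) < t := lt_of_lt_of_le one_pos ht
  have h := Gmono hf0 hf_pos hc hd hcond (mem_Ioi.2 one_pos) (mem_Ioi.2 ht0) ht
  simp only [Real.one_rpow] at h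
  have e : t ^ (-(2+m) : ℝ) * t ^ ((2+m) : ℝ) = 1 := by
    rw [← Real.rpow_add ht0, show (-(2+m) + (2+m) : ℝ) = 0 by ring, Real.rpow_zero]
  calc Fant f 1 * t ^ ((2+m) : ℝ) ≤ (Fant f t * t ^ (-(2+m) : ℝ)) * t ^ ((2+m) : ℝ) :=
        mul_le_mul_of_nonneg_right (by simpa using h) (Real.rpow_nonneg ht0.le _)
    _ = Fant f t := by rw [mul_assoc, e, mul_one]

lemma F_upper (hf0 : f 0 = 0) (hf_pos : ∀ t, 0 < t → 0 < f t)
    (hc : ContinuousOn f (Ici 0))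
    (hd : ∀ t ∈ Ici (0:ℝ), HasDerivWithinAt f (f' t) (Ici 0) t)
    (hcond : ∀ t, 0 < t → 1 + m ≤ t * f' t / f t ∧ t * f' t / f t ≤ 1 + M)
    {t : ℝ} (ht0 : 0 < t) (ht : t ≤ 1) :
    Fant f t ≤ Fant f 1 * t ^ ((2+m) : ℝ) := by
  have h := Gmono hf0 hf_pos hc hd hcond (mem_Ioi.2 ht0) (mem_Ioi.2 one_pos) ht
  simp only [Real.one_rpow, mul_one] at h
  have e : t ^ (-(2+m) : ℝ) * t ^ ((2+m) : ℝ) = 1 := by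
    rw [← Real.rpow_add ht0, show (-(2+m) + (2+m) : ℝ) = 0 by ring, Real.rpow_zero]
  calc Fant f t = (Fant f t * t ^ (-(2+m) : ℝ)) * t ^ ((2+m) : ℝ) := by
        rw [mul_assoc, e, mul_one]
    _ ≤ Fant f 1 * t ^ ((2+m) : ℝ) :=
        mul_le_mul_of_nonneg_right h (Real.rpow_nonneg ht0.le _)

lemma sqrt_mul_rpow {F1 : ℝ} (hF1 : 0 ≤ F1) {t : ℝ} (ht : 0 < t) :
    Real.sqrt (F1 * t ^ ((2+m) : ℝ)) = Real.sqrt F1 * t ^ ((2+m)/2 : ℝ) := by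
  have h2 : Real.sqrt (t ^ ((2+m) : ℝ)) = t ^ ((2+m)/2 : ℝ) := by
    rw [Real.sqrt_eq_rpow, ← Real.rpow_mul ht.le]
    congr 1
    ring
  rw [Real.sqrt_mul hF1, h2]

lemma sqrt_lower (hf0 : f 0 = 0) (hf_pos : ∀ t, 0 < t → 0 < f t)
    (hc : ContinuousOn f (Ici 0))
    (hd : ∀ t ∈ Ici (0:ℝ), HasDerivWithinAt f (f' t) (Ici 0) t)
    (hcond : ∀ t, 0 < t → 1 + m ≤ t * f' t / f t ∧ t * f' t / f t ≤ 1 + M)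
    {t : ℝ} (ht : 1 ≤ t) :
    Real.sqrt (Fant f 1) * t ^ ((2+m)/2 : ℝ) ≤ Real.sqrt (Fant f t) := by
  have ht0 : (0:ℝ) < t := lt_of_lt_of_le one_pos ht
  have hF1 : 0 ≤ Fant f 1 := (Fpos hc hf_pos one_pos).le
  rw [← sqrt_mul_rpow hF1 ht0]
  exact Real.sqrt_le_sqrt (F_lower hf0 hf_pos hc hd hcond ht)

lemma sqrt_upper (hf0 : f 0 = 0) (hf_pos : ∀ t, 0 < t → 0 < f t)
    (hc : ContinuousOn f (Ici 0))
    (hd : ∀ t ∈ Ici (0:ℝ), HasDerivWithinAt f (f' t) (Ici 0) t)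
    (hcond : ∀ t, 0 < t → 1 + m ≤ t * f' t / f t ∧ t * f' t / f t ≤ 1 + M)
    {t : ℝ} (ht0 : 0 < t) (ht : t ≤ 1) :
    Real.sqrt (Fant f t) ≤ Real.sqrt (Fant f 1) * t ^ ((2+m)/2 : ℝ) := by
  have hF1 : 0 ≤ Fant f 1 := (Fpos hc hf_pos one_pos).le
  rw [← sqrt_mul_rpow hF1 ht0]
  exact Real.sqrt_le_sqrt (F_upper hf0 hf_pos hc hd hcond ht0 ht)

lemma alg {F1 : ℝ} (hF1 : 0 < Real.sqrt F1) {t : ℝ} (ht : 0 < t) :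
    t / (Real.sqrt F1 * t ^ ((2+m)/2 : ℝ)) = (Real.sqrt F1)⁻¹ * t ^ (-(m/2) : ℝ) := by
  have e : t ^ ((2+m)/2 : ℝ) = t * t ^ (m/2 : ℝ) := by
    rw [show ((2+m)/2 : ℝ) = 1 + m/2 by ring, Real.rpow_add ht, Real.rpow_one]
  have h1 : t ^ (m/2 : ℝ) ≠ 0 := (Real.rpow_pos_of_pos ht _).ne'
  rw [e, Real.rpow_neg ht.le]
  field_simp


lemma invsqrt_cont (hc : ContinuousOn f (Ici 0)) (hf_pos : ∀ t, 0 < t → 0 < f t) :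
    ContinuousOn (fun t => 1 / Real.sqrt (Fant f t)) (Ioi 0) := by
  apply ContinuousOn.div continuousOn_const
  · exact ((Fcont hc).mono Ioi_subset_Ici_self).sqrt
  · exact fun t ht => ne_of_gt (Real.sqrt_pos.2 (Fpos hc hf_pos ht))

lemma phi_integrable (hm : 0 < m) (hf0 : f 0 = 0) (hf_pos : ∀ t, 0 < t → 0 < f t)
    (hc : ContinuousOn f (Ici 0))
    (hd : ∀ t ∈ Ici (0:ℝ), HasDerivWithinAt f (f' t) (Ici 0) t)
    (hcond : ∀ t, 0 < t → 1 + m ≤ t * f' t / f t ∧ t * f' t / f t ≤ 1 + M)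
    {u : ℝ} (hu : 0 < u) :
    IntegrableOn (fun t => 1 / Real.sqrt (Fant f t)) (Ioi u) := by
  set v := max u 1 with hv
  have hv1 : 1 ≤ v := le_max_right _ _
  have hvu : u ≤ v := le_max_left _ _
  have hv0 : (0:ℝ) < v := lt_of_lt_of_le one_pos hv1
  have hF1 : 0 < Fant f 1 := Fpos hc hf_pos one_pos
  have hsF1 : 0 < Real.sqrt (Fant f 1) := Real.sqrt_pos.2 hF1
  have hcont := invsqrt_cont hc hf_pos
  have hIoc : IntegrableOn (fun t => 1 / Real.sqrt (Fant f t)) (Ioc u v) := by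
    have hsub : Icc u v ⊆ Ioi 0 := fun x hx => lt_of_lt_of_le hu hx.1
    exact ((hcont.mono hsub).integrableOn_compact isCompact_Icc).mono_set Ioc_subset_Icc_self
  have hIoi : IntegrableOn (fun t => 1 / Real.sqrt (Fant f t)) (Ioi v) := by
    have hmeas : AEStronglyMeasurable (fun t => 1 / Real.sqrt (Fant f t))
        (volume.restrict (Ioi v)) :=
      (hcont.mono (Ioi_subset_Ioi hv0.le)).aestronglyMeasurable measurableSet_Ioi
    apply Integrable.mono'
      (g := fun t => (Real.sqrt (Fant f 1))⁻¹ * t ^ (-((2+m)/2) : ℝ)) ?_ hmeas ?_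
    · exact (integrableOn_Ioi_rpow_of_lt (by linarith) hv0).const_mul _
    · filter_upwards [ae_restrict_mem measurableSet_Ioi] with t ht
      have ht1 : (1:ℝ) ≤ t := le_trans hv1 (le_of_lt ht)
      have ht0 : (0:ℝ) < t := lt_of_lt_of_le one_pos ht1
      have hs := sqrt_lower hf0 hf_pos hc hd hcond ht1
      have hb : (0:ℝ) < Real.sqrt (Fant f 1) * t ^ ((2+m)/2 : ℝ) := by positivity
      rw [Real.norm_eq_abs, abs_of_nonneg (by positivity)]
      rw [Real.rpow_neg ht0.le, ← mul_inv, one_div]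
      exact inv_anti₀ hb hs
  rw [← Ioc_union_Ioi_eq_Ioi hvu]
  exact hIoc.union hIoi

lemma g_hasDeriv (hc : ContinuousOn f (Ici 0)) (hf_pos : ∀ t, 0 < t → 0 < f t)
    {t : ℝ} (ht : 0 < t) :
    HasDerivAt (fun s => s / Real.sqrt (Fant f s))
      ((1 - t * f t / (2 * Fant f t)) / Real.sqrt (Fant f t)) t := by
  have hF : 0 < Fant f t := Fpos hc hf_pos ht
  have hsF : 0 < Real.sqrt (Fant f t) := Real.sqrt_pos.2 hF
  have hs : HasDerivAt (fun s => Real.sqrt (Fant f s)) (1 / (2 * Real.sqrt (Fant f t)) * f t) t :=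
    (Real.hasDerivAt_sqrt (ne_of_gt hF)).comp t (FhasDeriv hc ht)
  have h := (hasDerivAt_id t).div hs (ne_of_gt hsF)
  refine h.congr_deriv ?_
  rw [Real.sq_sqrt hF.le]
  have e : Real.sqrt (Fant f t) * Real.sqrt (Fant f t) = Fant f t := Real.mul_self_sqrt hF.le
  field_simp
  simp only [id_eq]
  linear_combination 2 * e

lemma g_le (hm : 0 < m) (hf0 : f 0 = 0) (hf_pos : ∀ t, 0 < t → 0 < f t)
    (hc : ContinuousOn f (Ici 0))
    (hd : ∀ t ∈ Ici (0:ℝ), HasDerivWithinAt f (f' t) (Ici 0) t)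
    (hcond : ∀ t, 0 < t → 1 + m ≤ t * f' t / f t ∧ t * f' t / f t ≤ 1 + M)
    {t : ℝ} (ht : 1 ≤ t) :
    t / Real.sqrt (Fant f t) ≤ (Real.sqrt (Fant f 1))⁻¹ * t ^ (-(m/2) : ℝ) := by
  have ht0 : (0:ℝ) < t := lt_of_lt_of_le one_pos ht
  have hF1 : 0 < Real.sqrt (Fant f 1) := Real.sqrt_pos.2 (Fpos hc hf_pos one_pos)
  have hb : (0:ℝ) < Real.sqrt (Fant f 1) * t ^ ((2+m)/2 : ℝ) := by positivity
  rw [← alg hF1 ht0]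
  exact div_le_div_of_nonneg_left ht0.le hb (sqrt_lower hf0 hf_pos hc hd hcond ht)

lemma g_ge (hm : 0 < m) (hf0 : f 0 = 0) (hf_pos : ∀ t, 0 < t → 0 < f t)
    (hc : ContinuousOn f (Ici 0))
    (hd : ∀ t ∈ Ici (0:ℝ), HasDerivWithinAt f (f' t) (Ici 0) t)
    (hcond : ∀ t, 0 < t → 1 + m ≤ t * f' t / f t ∧ t * f' t / f t ≤ 1 + M)
    {t : ℝ} (ht0 : 0 < t) (ht : t ≤ 1) :
    (Real.sqrt (Fant f 1))⁻¹ * t ^ (-(m/2) : ℝ) ≤ t / Real.sqrt (Fant f t) := by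
  have hF1 : 0 < Real.sqrt (Fant f 1) := Real.sqrt_pos.2 (Fpos hc hf_pos one_pos)
  have hsF : 0 < Real.sqrt (Fant f t) := Real.sqrt_pos.2 (Fpos hc hf_pos ht0)
  rw [← alg hF1 ht0]
  exact div_le_div_of_nonneg_left ht0.le hsF (sqrt_upper hf0 hf_pos hc hd hcond ht0 ht)

lemma g_tendsto (hm : 0 < m) (hf0 : f 0 = 0) (hf_pos : ∀ t, 0 < t → 0 < f t)
    (hc : ContinuousOn f (Ici 0))
    (hd : ∀ t ∈ Ici (0:ℝ), HasDerivWithinAt f (f' t) (Ici 0) t)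
    (hcond : ∀ t, 0 < t → 1 + m ≤ t * f' t / f t ∧ t * f' t / f t ≤ 1 + M) :
    Tendsto (fun t => t / Real.sqrt (Fant f t)) atTop (nhds 0) := by
  have h1 : Tendsto (fun t : ℝ => (Real.sqrt (Fant f 1))⁻¹ * t ^ (-(m/2) : ℝ)) atTop (nhds 0) := by
    have := (tendsto_rpow_neg_atTop (y := m/2) (by linarith)).const_mul
      ((Real.sqrt (Fant f 1))⁻¹)
    simpa using this
  apply tendsto_of_tendsto_of_tendsto_of_le_of_le' tendsto_const_nhds h1
  · filter_upwards [eventually_ge_atTop (1:ℝ)] with t ht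
    have ht0 : (0:ℝ) < t := lt_of_lt_of_le one_pos ht
    positivity
  · filter_upwards [eventually_ge_atTop (1:ℝ)] with t ht
    exact g_le hm hf0 hf_pos hc hd hcond ht

lemma main_bound (hm : 0 < m) (hmM : m < M) (hf0 : f 0 = 0)
    (hf_pos : ∀ t, 0 < t → 0 < f t)
    (hc : ContinuousOn f (Ici 0))
    (hd : ∀ t ∈ Ici (0:ℝ), HasDerivWithinAt f (f' t) (Ici 0) t)
    (hcond : ∀ t, 0 < t → 1 + m ≤ t * f' t / f t ∧ t * f' t / f t ≤ 1 + M)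
    {u : ℝ} (hu : 0 < u) :
    m/2 * phi f u ≤ u / Real.sqrt (Fant f u) ∧
      u / Real.sqrt (Fant f u) ≤ M/2 * phi f u := by
  set Dg : ℝ → ℝ := fun t => (1 - t * f t / (2 * Fant f t)) / Real.sqrt (Fant f t) with hDg
  have hbound : ∀ t ∈ Ioi u,
      m/2 * (1 / Real.sqrt (Fant f t)) ≤ -Dg t ∧
      -Dg t ≤ M/2 * (1 / Real.sqrt (Fant f t)) := by
    intro t ht
    have ht0 : 0 < t := hu.trans ht
    have hF : 0 < Fant f t := Fpos hc hf_pos ht0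
    have hsF : 0 < Real.sqrt (Fant f t) := Real.sqrt_pos.2 hF
    have hk := key hf0 hf_pos hc hd hcond ht0
    have e : -Dg t = (t * f t / (2 * Fant f t) - 1) * (1 / Real.sqrt (Fant f t)) := by
      rw [hDg]
      field_simp
      ring
    have h1 : m/2 ≤ t * f t / (2 * Fant f t) - 1 := by
      rw [le_sub_iff_add_le, le_div_iff₀ (by linarith)]
      nlinarith [hk.1]
    have h2 : t * f t / (2 * Fant f t) - 1 ≤ M/2 := by
      rw [sub_le_iff_le_add, div_le_iff₀ (by linarith)]
      nlinarith [hk.2]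
    constructor
    · rw [e]
      exact mul_le_mul_of_nonneg_right h1 (by positivity)
    · rw [e]
      exact mul_le_mul_of_nonneg_right h2 (by positivity)
  have hint1 : IntegrableOn (fun t => 1 / Real.sqrt (Fant f t)) (Ioi u) :=
    phi_integrable hm hf0 hf_pos hc hd hcond hu
  have hintM : IntegrableOn (fun t => M/2 * (1 / Real.sqrt (Fant f t))) (Ioi u) :=
    hint1.const_mul _
  have hintm : IntegrableOn (fun t => m/2 * (1 / Real.sqrt (Fant f t))) (Ioi u) :=
    hint1.const_mul _
  have hcf : ContinuousOn f (Ioi u) := hc.mono (fun x hx => (hu.trans hx).le)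
  have hcF : ContinuousOn (Fant f) (Ioi u) := (Fcont hc).mono (fun x hx => (hu.trans hx).le)
  have hDgcont : ContinuousOn Dg (Ioi u) := by
    apply ContinuousOn.div
    · apply ContinuousOn.sub continuousOn_const
      apply ContinuousOn.div (continuousOn_id.mul hcf) (continuousOn_const.mul hcF)
      intro t ht
      have := Fpos hc hf_pos (hu.trans ht)
      show 2 * Fant f t ≠ 0
      positivity
    · exact hcF.sqrt
    · exact fun t ht => ne_of_gt (Real.sqrt_pos.2 (Fpos hc hf_pos (hu.trans ht)))
  have hDgint : IntegrableOn Dg (Ioi u) := by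
    apply Integrable.mono' hintM (hDgcont.aestronglyMeasurable measurableSet_Ioi)
    filter_upwards [ae_restrict_mem measurableSet_Ioi] with t ht
    have h := hbound t ht
    have h0 : 0 ≤ -Dg t := le_trans (by positivity) h.1
    rw [Real.norm_eq_abs, abs_of_nonpos (by linarith)]
    exact h.2
  have hcont0 : ContinuousWithinAt (fun s => s / Real.sqrt (Fant f s)) (Ici u) u := by
    have hFc : ContinuousAt (Fant f) u := (Fcont hc u hu.le).continuousAt (Ici_mem_nhds hu)
    have hsF : 0 < Real.sqrt (Fant f u) := Real.sqrt_pos.2 (Fpos hc hf_pos hu)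
    exact (continuousAt_id.div (hFc.sqrt) (ne_of_gt hsF)).continuousWithinAt
  have hFTC : ∫ t in Ioi u, Dg t = 0 - u / Real.sqrt (Fant f u) :=
    integral_Ioi_of_hasDerivAt_of_tendsto hcont0
      (fun x hx => g_hasDeriv hc hf_pos (hu.trans hx)) hDgint
      (g_tendsto hm hf0 hf_pos hc hd hcond)
  have hg : u / Real.sqrt (Fant f u) = ∫ t in Ioi u, -Dg t := by
    rw [integral_neg, hFTC]
    ring
  constructor
  · rw [hg]
    calc m/2 * phi f u = ∫ t in Ioi u, m/2 * (1 / Real.sqrt (Fant f t)) := by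
          unfold phi
          rw [← integral_const_mul]
      _ ≤ ∫ t in Ioi u, -Dg t :=
          setIntegral_mono_on hintm hDgint.neg measurableSet_Ioi (fun t ht => (hbound t ht).1)
  · rw [hg]
    calc (∫ t in Ioi u, -Dg t) ≤ ∫ t in Ioi u, M/2 * (1 / Real.sqrt (Fant f t)) :=
          setIntegral_mono_on hDgint.neg hintM measurableSet_Ioi (fun t ht => (hbound t ht).2)
      _ = M/2 * phi f u := by
          unfold phi
          rw [← integral_const_mul]

end PhiAux

/-- `φ` is strictly decreasing on `(0,∞)`, blows up at `0`, vanishes at `+∞`, and satisfies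
`2/M ≤ φ(u)·√(F(u))/u ≤ 2/m` for every `u > 0`. -/
theorem phi_monotonicity_and_bounds (f f' : ℝ → ℝ) (m M : ℝ) (hm : 0 < m) (hmM : m < M)
    (hf_nonneg : ∀ t, 0 ≤ t → 0 ≤ f t) (hf0 : f 0 = 0)
    (hf_pos : ∀ t, 0 < t → 0 < f t)
    (hf_mono : MonotoneOn f (Set.Ici 0))
    (hf_deriv : ∀ t ∈ Set.Ici (0:ℝ), HasDerivWithinAt f (f' t) (Set.Ici 0) t)
    (hf'_cont : ContinuousOn f' (Set.Ici 0))
    (hcond : ∀ t, 0 < t → 1 + m ≤ t * f' t / f t ∧ t * f' t / f t ≤ 1 + M) :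
    StrictAntiOn (phi f) (Set.Ioi 0) ∧
    Tendsto (phi f) (nhdsWithin 0 (Set.Ioi 0)) atTop ∧
    Tendsto (phi f) atTop (nhds 0) ∧
    ∀ u, 0 < u →
      2 / M ≤ phi f u * Real.sqrt (Fant f u) / u ∧
      phi f u * Real.sqrt (Fant f u) / u ≤ 2 / m := by
  have hc : ContinuousOn f (Set.Ici 0) := fun t ht => (hf_deriv t ht).continuousWithinAt
  have hM : 0 < M := hm.trans hmM
  have hF1 : 0 < Fant f 1 := PhiAux.Fpos hc hf_pos one_pos
  have hsF1 : 0 < Real.sqrt (Fant f 1) := Real.sqrt_pos.2 hF1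
  have hphi_nonneg : ∀ u : ℝ, 0 ≤ phi f u := by
    intro u
    apply setIntegral_nonneg measurableSet_Ioi
    intro t _
    positivity
  refine ⟨?_, ?_, ?_, ?_⟩
  · -- StrictAntiOn
    intro u hu v hv huv
    rw [Set.mem_Ioi] at hu hv
    have hIu := PhiAux.phi_integrable hm hf0 hf_pos hc hf_deriv hcond hu
    have hIou : IntegrableOn (fun t => 1 / Real.sqrt (Fant f t)) (Set.Ioc u v) :=
      hIu.mono_set Set.Ioc_subset_Ioi_self
    have hIv : IntegrableOn (fun t => 1 / Real.sqrt (Fant f t)) (Set.Ioi v) :=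
      hIu.mono_set (Set.Ioi_subset_Ioi huv.le)
    have h1 : phi f u = (∫ t in Set.Ioc u v, 1 / Real.sqrt (Fant f t))
        + ∫ t in Set.Ioi v, 1 / Real.sqrt (Fant f t) := by
      unfold phi
      rw [← Set.Ioc_union_Ioi_eq_Ioi huv.le,
        setIntegral_union (Set.Ioc_disjoint_Ioi le_rfl) measurableSet_Ioi hIou hIv]
    have hFv : 0 < Real.sqrt (Fant f v) := Real.sqrt_pos.2 (PhiAux.Fpos hc hf_pos hv)
    have hlow : ∀ t ∈ Set.Ioc u v, 1 / Real.sqrt (Fant f v) ≤ 1 / Real.sqrt (Fant f t) := by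
      intro t ht
      have ht0 : 0 < t := hu.trans ht.1
      have hFt : 0 < Real.sqrt (Fant f t) := Real.sqrt_pos.2 (PhiAux.Fpos hc hf_pos ht0)
      have hmono := PhiAux.Fmono hc hf_nonneg (Set.mem_Ici.2 ht0.le) (Set.mem_Ici.2 hv.le) ht.2
      exact one_div_le_one_div_of_le hFt (Real.sqrt_le_sqrt hmono)
    have hconst : IntegrableOn (fun _ : ℝ => 1 / Real.sqrt (Fant f v)) (Set.Ioc u v) :=
      integrableOn_const measure_Ioc_lt_top.ne
    have hc2 : (∫ _ in Set.Ioc u v, 1 / Real.sqrt (Fant f v))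
        ≤ ∫ t in Set.Ioc u v, 1 / Real.sqrt (Fant f t) :=
      setIntegral_mono_on hconst hIou measurableSet_Ioc hlow
    rw [setIntegral_const, Real.volume_real_Ioc_of_le huv.le] at hc2
    have hpos2 : 0 < ∫ t in Set.Ioc u v, 1 / Real.sqrt (Fant f t) := by
      have h4 : 0 < v - u := by linarith
      have h5 : 0 < 1 / Real.sqrt (Fant f v) := one_div_pos.mpr hFv
      have h6 : 0 < (v - u) • (1 / Real.sqrt (Fant f v)) := by
        rw [smul_eq_mul]; exact mul_pos h4 h5
      linarith
    have h5 : phi f v = ∫ t in Set.Ioi v, 1 / Real.sqrt (Fant f t) := rfl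
    rw [h1, h5]
    linarith
  · -- blow up at 0
    set C := 2 / M * (Real.sqrt (Fant f 1))⁻¹ with hC
    have hCpos : 0 < C := by positivity
    have t1 : Tendsto (fun u : ℝ => u ^ (-(m/2) : ℝ)) (nhdsWithin 0 (Set.Ioi 0)) atTop := by
      have h2 : Tendsto (fun u : ℝ => (u⁻¹) ^ ((m/2) : ℝ)) (nhdsWithin 0 (Set.Ioi 0)) atTop :=
        (tendsto_rpow_atTop (by linarith)).comp tendsto_inv_nhdsGT_zero
      apply h2.congr'
      filter_upwards [self_mem_nhdsWithin] with x hx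
      rw [Set.mem_Ioi] at hx
      rw [Real.inv_rpow hx.le, ← Real.rpow_neg hx.le]
    have t2 : Tendsto (fun u : ℝ => C * u ^ (-(m/2) : ℝ)) (nhdsWithin 0 (Set.Ioi 0)) atTop :=
      Tendsto.const_mul_atTop hCpos t1
    apply tendsto_atTop_mono' _ ?_ t2
    filter_upwards [Ioc_mem_nhdsGT_of_mem (Set.mem_Ico.2 ⟨le_rfl, one_pos⟩)] with u hu
    have hu0 : 0 < u := hu.1
    have hmain := (PhiAux.main_bound hm hmM hf0 hf_pos hc hf_deriv hcond hu0).2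
    have hgge := PhiAux.g_ge hm hf0 hf_pos hc hf_deriv hcond hu0 hu.2
    calc C * u ^ (-(m/2) : ℝ)
        = 2/M * ((Real.sqrt (Fant f 1))⁻¹ * u ^ (-(m/2) : ℝ)) := by rw [hC]; ring
      _ ≤ 2/M * (u / Real.sqrt (Fant f u)) :=
          mul_le_mul_of_nonneg_left hgge (by positivity)
      _ ≤ 2/M * (M/2 * phi f u) :=
          mul_le_mul_of_nonneg_left hmain (by positivity)
      _ = phi f u := by field_simp
  · -- vanish at infinity
    have hupper : Tendsto (fun u : ℝ => (2/m * (Real.sqrt (Fant f 1))⁻¹) * u ^ (-(m/2) : ℝ))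
        atTop (nhds 0) := by
      have := (tendsto_rpow_neg_atTop (y := m/2) (by linarith)).const_mul
        (2/m * (Real.sqrt (Fant f 1))⁻¹)
      simpa using this
    apply tendsto_of_tendsto_of_tendsto_of_le_of_le' tendsto_const_nhds hupper
    · filter_upwards [eventually_ge_atTop (1:ℝ)] with u _
      exact hphi_nonneg u
    · filter_upwards [eventually_ge_atTop (1:ℝ)] with u hu1
      have hu0 : (0:ℝ) < u := lt_of_lt_of_le one_pos hu1
      have hmainl := (PhiAux.main_bound hm hmM hf0 hf_pos hc hf_deriv hcond hu0).1
      have hgle := PhiAux.g_le hm hf0 hf_pos hc hf_deriv hcond hu1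
      calc phi f u = 2/m * (m/2 * phi f u) := by field_simp
        _ ≤ 2/m * (u / Real.sqrt (Fant f u)) :=
            mul_le_mul_of_nonneg_left hmainl (by positivity)
        _ ≤ 2/m * ((Real.sqrt (Fant f 1))⁻¹ * u ^ (-(m/2) : ℝ)) :=
            mul_le_mul_of_nonneg_left hgle (by positivity)
        _ = (2/m * (Real.sqrt (Fant f 1))⁻¹) * u ^ (-(m/2) : ℝ) := by ring
  · -- the two-sided bound
    intro u hu
    obtain ⟨hl, hr⟩ := PhiAux.main_bound hm hmM hf0 hf_pos hc hf_deriv hcond hu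
    have hsF : 0 < Real.sqrt (Fant f u) := Real.sqrt_pos.2 (PhiAux.Fpos hc hf_pos hu)
    constructor
    · rw [div_le_div_iff₀ hM hu]
      have h7 : u ≤ M/2 * phi f u * Real.sqrt (Fant f u) := by
        rw [← div_le_iff₀ hsF]
        exact hr
      nlinarith
    · rw [div_le_div_iff₀ hu hm]
      have h7 : m/2 * phi f u * Real.sqrt (Fant f u) ≤ u := by
        rw [← le_div_iff₀ hsF]
        exact hl
      nlinarith
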